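/- arXiv:2410.03050 — 6 statements merged into one kernel-verified Lean document; each statement's English description precedes it below -/
import Mathlib

section
/- For every x ∈ ℝⁿ and every (λ, r) ∈ ℝᵐ × (0, ∞), the sharp augmented Lagrangian equals the minimum of the smoothing function over the smoothing variable: L̄₁(x; λ, r) = min over t ≥ 0 of L̃_{λ,r}(x, t). Moreover, when h(x) ≠ 0 the minimum is attained at t = ‖h(x)‖, and when h(x) = 0 it is attained at t = 0. -/
/-! By AM-GM, `r a ≤ r a² / (2t) + r t / 2` for `t > 0`, with equality at `t = a`; at `t = 0`
the smoothing function is finite only on the feasible set, where it equals `f`. -/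

noncomputable section
open Classical in

def Ltilde {n m : ℕ} (f : EuclideanSpace ℝ (Fin n) → ℝ)
    (h : EuclideanSpace ℝ (Fin n) → EuclideanSpace ℝ (Fin m))
    (lam : EuclideanSpace ℝ (Fin m)) (r : ℝ)
    (x : EuclideanSpace ℝ (Fin n)) (t : ℝ) : EReal :=
  if 0 < t then
    (((f x + (inner ℝ lam (h x) : ℝ) + r / (2 * t) * ‖h x‖ ^ 2 + r / 2 * t) : ℝ) : EReal)
  else if t = 0 ∧ h x = 0 then ((f x : ℝ) : EReal)
  else ⊤

theorem mul_le_div_mul_sq_add_div_mul {r t : ℝ} (hr : 0 ≤ r) (ht : 0 < t) (a : ℝ) :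
    r * a ≤ r / (2 * t) * a ^ 2 + r / 2 * t := by
  have cleared : r * a * (2 * t) ≤ r * a ^ 2 + r * t * t := by
    nlinarith [mul_nonneg hr (sq_nonneg (a - t))]
  rw [div_mul_eq_mul_div, div_add' _ _ _ (by positivity), le_div_iff₀ (by positivity)]
  linarith

theorem div_mul_sq_add_div_mul_self (r : ℝ) {a : ℝ} (ha : a ≠ 0) :
    r / (2 * a) * a ^ 2 + r / 2 * a = r * a := by
  field_simp
  ring

section Ltilde

variable {n m : ℕ} (f : EuclideanSpace ℝ (Fin n) → ℝ)
    (h : EuclideanSpace ℝ (Fin n) → EuclideanSpace ℝ (Fin m))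
    (lam : EuclideanSpace ℝ (Fin m)) (r : ℝ) (x : EuclideanSpace ℝ (Fin n))

theorem Ltilde_of_pos {t : ℝ} (ht : 0 < t) :
    Ltilde f h lam r x t = ((f x + inner ℝ lam (h x) + r / (2 * t) * ‖h x‖ ^ 2 + r / 2 * t : ℝ) :
      EReal) :=
  if_pos ht

theorem Ltilde_zero_of_eq_zero (hx : h x = 0) : Ltilde f h lam r x 0 = (f x : EReal) := by
  rw [Ltilde, if_neg (lt_irrefl 0), if_pos ⟨rfl, hx⟩]

theorem Ltilde_zero_of_ne_zero (hx : h x ≠ 0) : Ltilde f h lam r x 0 = ⊤ := by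
  rw [Ltilde, if_neg (lt_irrefl 0), if_neg (fun h0 => hx h0.2)]

theorem sharpLagrangian_le_Ltilde (hr : 0 ≤ r) {t : ℝ} (ht : 0 ≤ t) :
    ((f x + inner ℝ lam (h x) + r * ‖h x‖ : ℝ) : EReal) ≤ Ltilde f h lam r x t := by
  rcases ht.eq_or_lt with rfl | ht
  · by_cases hx : h x = 0
    · simp [Ltilde_zero_of_eq_zero f h lam r x hx, hx]
    · simp [Ltilde_zero_of_ne_zero f h lam r x hx]
  · rw [Ltilde_of_pos f h lam r x ht, EReal.coe_le_coe_iff]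
    linarith [mul_le_div_mul_sq_add_div_mul hr ht ‖h x‖]

end Ltilde

theorem stmt0_general {n m : ℕ} (f : EuclideanSpace ℝ (Fin n) → ℝ)
    (h : EuclideanSpace ℝ (Fin n) → EuclideanSpace ℝ (Fin m))
    (lam : EuclideanSpace ℝ (Fin m)) (r : ℝ) (hr : 0 < r)
    (x : EuclideanSpace ℝ (Fin n)) :
    (∀ t : ℝ, 0 ≤ t →
      (((f x + (inner ℝ lam (h x) : ℝ) + r * ‖h x‖ : ℝ)) : EReal) ≤ Ltilde f h lam r x t) ∧
    (h x ≠ 0 → Ltilde f h lam r x ‖h x‖ =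
      (((f x + (inner ℝ lam (h x) : ℝ) + r * ‖h x‖ : ℝ)) : EReal)) ∧
    (h x = 0 → Ltilde f h lam r x 0 =
      (((f x + (inner ℝ lam (h x) : ℝ) + r * ‖h x‖ : ℝ)) : EReal)) := by
  refine ⟨fun t ht => sharpLagrangian_le_Ltilde f h lam r x hr.le ht, fun hx => ?_, fun hx => ?_⟩
  · rw [Ltilde_of_pos f h lam r x (norm_pos_iff.mpr hx), add_assoc _ (r / (2 * ‖h x‖) * _),
      div_mul_sq_add_div_mul_self r (norm_ne_zero_iff.mpr hx)]
  · simp [Ltilde_zero_of_eq_zero f h lam r x hx, hx]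

/-- the sharp augmented Lagrangian `L̄₁(x; λ, r) = f x + ⟨λ, h x⟩ + r‖h x‖`
is the minimum over `t ≥ 0` of the smoothing function, attained at `t = ‖h x‖`
when `h x ≠ 0`, and at `t = 0` when `h x = 0`. -/
theorem stmt0 {n m : ℕ} (f : EuclideanSpace ℝ (Fin n) → ℝ)
    (h : EuclideanSpace ℝ (Fin n) → EuclideanSpace ℝ (Fin m))
    (hf : ContDiff ℝ 2 f) (hh : ContDiff ℝ 2 h)
    (lam : EuclideanSpace ℝ (Fin m)) (r : ℝ) (hr : 0 < r)
    (x : EuclideanSpace ℝ (Fin n)) :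
    (∀ t : ℝ, 0 ≤ t →
      (((f x + (inner ℝ lam (h x) : ℝ) + r * ‖h x‖ : ℝ)) : EReal) ≤ Ltilde f h lam r x t) ∧
    (h x ≠ 0 → Ltilde f h lam r x ‖h x‖ =
      (((f x + (inner ℝ lam (h x) : ℝ) + r * ‖h x‖ : ℝ)) : EReal)) ∧
    (h x = 0 → Ltilde f h lam r x 0 =
      (((f x + (inner ℝ lam (h x) : ℝ) + r * ‖h x‖ : ℝ)) : EReal)) :=
  stmt0_general f h lam r hr x
end
end

section
/- Consider n = m = 1, f(x) = x²/2 and h(x) = x, so that for t > 0 the smoothing function is L̃_{λ,r}(x,t) = x²/2 + λx + (r/(2t))x² + (r/2)t, with gradient ∇L̃_{λ,r}(x,t) = (x + λ + (r/t)x, (r/2)(1 − x²/t²)). For every λ ∈ ℝ, c > 0 and r ≥ |λ| + c, there exists ε₀ > 0 such that for all ε ∈ (0, ε₀) there is no pair (x, t) with t > 0 satisfying ‖∇L̃_{λ,r}(x,t)‖ ≤ ε. -/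
/-!
Put `u = x / t`. Since `x` and `u` have the same sign, `|x + (r/t) x| ≥ r |u|`, so a small first
gradient component forces `r |u| ≤ |λ| + ε`, while a small second component forces `u² ≈ 1`.
For `r ≥ |λ| + c` and `ε < c / 3` these are incompatible.
-/

lemma mul_abs_div_le_abs_add_abs {lam r x t : ℝ} (hr : 0 ≤ r) (ht : 0 < t) :
    r * |x / t| ≤ |x + lam + r / t * x| + |lam| := by
  have hsame_sign : r * |x / t| ≤ |x + r / t * x| := by
    have hpos : 0 < 1 + r / t := by positivity
    rw [show x + r / t * x = (1 + r / t) * x by ring, abs_mul, abs_of_pos hpos, abs_div,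
      abs_of_pos ht]
    calc r * (|x| / t) = r / t * |x| := by ring
      _ ≤ (1 + r / t) * |x| := mul_le_mul_of_nonneg_right (by linarith) (abs_nonneg x)
  calc r * |x / t| ≤ |x + r / t * x| := hsame_sign
    _ = |(x + lam + r / t * x) - lam| := by ring_nf
    _ ≤ |x + lam + r / t * x| + |lam| := abs_sub _ _

lemma le_add_three_mul_of_mul_le_of_mul_one_sub_sq_le {a r s ε : ℝ} (hr : 0 ≤ r) (hs : 0 ≤ s)
    (hε : 0 ≤ ε) (h₁ : r * s ≤ a + ε) (h₂ : r * (1 - s ^ 2) ≤ 2 * ε) : r ≤ a + 3 * ε := by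
  rcases le_or_gt s 1 with hs1 | hs1
  · have : r * (1 - s) ≤ r * (1 - s ^ 2) := by
      apply mul_le_mul_of_nonneg_left _ hr
      nlinarith
    linarith
  · have : r ≤ r * s := le_mul_of_one_le_right hr hs1.le
    linarith

/-- for the problem `min x²/2 s.t. x = 0` (so `n = m = 1`), with
`L̃_{λ,r}(x,t) = x²/2 + λx + (r/(2t))x² + (r/2)t` for `t > 0` and gradient
`∇L̃_{λ,r}(x,t) = (x + λ + (r/t)x, (r/2)(1 − x²/t²))`: for every `λ`, `c > 0` and
`r ≥ |λ| + c`, there is `ε₀ > 0` such that for all `ε ∈ (0, ε₀)` there is no `(x, t)`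
with `t > 0` and `‖∇L̃_{λ,r}(x,t)‖ ≤ ε`. -/
theorem stmt11 (lam c r : ℝ) (hc : 0 < c) (hr : |lam| + c ≤ r) :
    ∃ ε₀ > (0 : ℝ), ∀ ε : ℝ, 0 < ε → ε < ε₀ →
      ¬ ∃ x t : ℝ, 0 < t ∧
        Real.sqrt ((x + lam + (r / t) * x) ^ 2 +
          ((r / 2) * (1 - x ^ 2 / t ^ 2)) ^ 2) ≤ ε := by
  refine ⟨c / 3, by positivity, ?_⟩
  rintro ε hε hεc ⟨x, t, ht, hgrad⟩
  have hr₀ : 0 ≤ r := by linarith [abs_nonneg lam]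
  have hgrad_x : |x + lam + r / t * x| ≤ ε :=
    (Real.abs_le_sqrt (le_add_of_nonneg_right (sq_nonneg _))).trans hgrad
  have hgrad_t : |r / 2 * (1 - x ^ 2 / t ^ 2)| ≤ ε :=
    (Real.abs_le_sqrt (le_add_of_nonneg_left (sq_nonneg _))).trans hgrad
  have h₁ : r * |x / t| ≤ |lam| + ε := by
    linarith [mul_abs_div_le_abs_add_abs (lam := lam) (x := x) hr₀ ht]
  have h₂ : r * (1 - |x / t| ^ 2) ≤ 2 * ε := by
    rw [sq_abs, div_pow]
    linarith [le_abs_self (r / 2 * (1 - x ^ 2 / t ^ 2))]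
  have hr_le := le_add_three_mul_of_mul_le_of_mul_one_sub_sq_le hr₀ (abs_nonneg _) hε.le h₁ h₂
  linarith
end

section
/- Let f : ℝⁿ → ℝ satisfy f(x) ≥ κ_f for all x, and let h : ℝⁿ → ℝᵐ satisfy ‖h(x)‖ ≤ κ_h for all x. Then for every (λ, r) ∈ ℝᵐ × (0, ∞), every s > 0, and every (x, t) ∈ ℝⁿ × (0, ∞), the barrier-augmented smoothing function satisfies L̂ˢ_{λ,r}(x,t) ≥ κ_f + min{0, (r − ‖λ‖) κ_h}; in particular L̂ˢ_{λ,r} is bounded from below on ℝⁿ × (0, ∞). -/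
/-!
By Cauchy–Schwarz, `⟪λ, h x⟫ ≥ -‖λ‖ ‖h x‖`, and by AM–GM in the form
`a²/(2t) + t/2 ≥ a`, the penalty and smoothing terms together dominate `r ‖h x‖`.
Hence `L̂ˢ_{λ,r}(x,t) ≥ f x + (r - ‖λ‖) ‖h x‖`, the barrier term being nonnegative, and
`(r - ‖λ‖) a ≥ min 0 ((r - ‖λ‖) κ_h)` for every `a ∈ [0, κ_h]`.
-/

lemma le_sq_div_two_mul_add_half {a t : ℝ} (ht : 0 < t) : a ≤ a ^ 2 / (2 * t) + t / 2 := by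
  have key : a ^ 2 / (2 * t) + t / 2 - a = (a - t) ^ 2 / (2 * t) := by
    field_simp
    ring
  have : 0 ≤ (a - t) ^ 2 / (2 * t) := by positivity
  linarith

lemma min_zero_mul_le_mul {c a κ : ℝ} (ha : 0 ≤ a) (haκ : a ≤ κ) : min 0 (c * κ) ≤ c * a := by
  rcases le_or_gt 0 c with hc | hc
  · exact (min_le_left _ _).trans (mul_nonneg hc ha)
  · exact (min_le_right _ _).trans (mul_le_mul_of_nonpos_left haκ hc.le)

lemma min_zero_mul_le_inner_add_smoothing {E : Type*} [NormedAddCommGroup E]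
    [InnerProductSpace ℝ E] {lam v : E} {r t κ : ℝ} (hr : 0 ≤ r) (ht : 0 < t) (hv : ‖v‖ ≤ κ) :
    min 0 ((r - ‖lam‖) * κ) ≤ inner ℝ lam v + r / (2 * t) * ‖v‖ ^ 2 + r / 2 * t := by
  have hinner : -(‖lam‖ * ‖v‖) ≤ inner ℝ lam v := neg_le_of_abs_le (abs_real_inner_le_norm lam v)
  have hsmooth : r * ‖v‖ ≤ r / (2 * t) * ‖v‖ ^ 2 + r / 2 * t := by
    have := mul_le_mul_of_nonneg_left (le_sq_div_two_mul_add_half (a := ‖v‖) ht) hr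
    calc r * ‖v‖ ≤ r * (‖v‖ ^ 2 / (2 * t) + t / 2) := this
      _ = r / (2 * t) * ‖v‖ ^ 2 + r / 2 * t := by ring
  have hmin := min_zero_mul_le_mul (c := r - ‖lam‖) (norm_nonneg v) hv
  linarith

theorem stmt12_general {n m : ℕ} (f : EuclideanSpace ℝ (Fin n) → ℝ)
    (h : EuclideanSpace ℝ (Fin n) → EuclideanSpace ℝ (Fin m))
    (κf κh : ℝ) (hfb : ∀ x, κf ≤ f x) (hhb : ∀ x, ‖h x‖ ≤ κh) :
    ∀ (lam : EuclideanSpace ℝ (Fin m)) (r s : ℝ), 0 < r → 0 < s →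
      (∀ (x : EuclideanSpace ℝ (Fin n)) (t : ℝ), 0 < t →
        κf + min 0 ((r - ‖lam‖) * κh) ≤
          f x + (inner ℝ lam (h x) : ℝ) + r / (2 * t) * ‖h x‖ ^ 2 + r / 2 * t
            + r / (2 * t) * s ^ 2) ∧
      ∃ c : ℝ, ∀ (x : EuclideanSpace ℝ (Fin n)) (t : ℝ), 0 < t →
        c ≤ f x + (inner ℝ lam (h x) : ℝ) + r / (2 * t) * ‖h x‖ ^ 2 + r / 2 * t
            + r / (2 * t) * s ^ 2 := by
  intro lam r s hr _
  have lower_bound : ∀ (x : EuclideanSpace ℝ (Fin n)) (t : ℝ), 0 < t →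
      κf + min 0 ((r - ‖lam‖) * κh) ≤
        f x + (inner ℝ lam (h x) : ℝ) + r / (2 * t) * ‖h x‖ ^ 2 + r / 2 * t
          + r / (2 * t) * s ^ 2 := by
    intro x t ht
    have hbarrier : 0 ≤ r / (2 * t) * s ^ 2 := by positivity
    linarith [hfb x, min_zero_mul_le_inner_add_smoothing (lam := lam) hr.le ht (hhb x)]
  exact ⟨lower_bound, _, lower_bound⟩

/-- if `f ≥ κ_f` and `‖h‖ ≤ κ_h` everywhere, then the barrier-augmented
smoothing function `L̂ˢ_{λ,r}(x,t) = f x + ⟨λ, h x⟩ + (r/(2t))‖h x‖² + (r/2)t + (r/(2t))s²`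
satisfies `L̂ˢ_{λ,r}(x,t) ≥ κ_f + min{0, (r − ‖λ‖) κ_h}` on `ℝⁿ × (0, ∞)`;
in particular it is bounded from below there. -/
theorem stmt12 {n m : ℕ} (f : EuclideanSpace ℝ (Fin n) → ℝ)
    (h : EuclideanSpace ℝ (Fin n) → EuclideanSpace ℝ (Fin m))
    (hf : ContDiff ℝ 2 f) (hh : ContDiff ℝ 2 h)
    (κf κh : ℝ) (hfb : ∀ x, κf ≤ f x) (hhb : ∀ x, ‖h x‖ ≤ κh) :
    ∀ (lam : EuclideanSpace ℝ (Fin m)) (r s : ℝ), 0 < r → 0 < s →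
      (∀ (x : EuclideanSpace ℝ (Fin n)) (t : ℝ), 0 < t →
        κf + min 0 ((r - ‖lam‖) * κh) ≤
          f x + (inner ℝ lam (h x) : ℝ) + r / (2 * t) * ‖h x‖ ^ 2 + r / 2 * t
            + r / (2 * t) * s ^ 2) ∧
      ∃ c : ℝ, ∀ (x : EuclideanSpace ℝ (Fin n)) (t : ℝ), 0 < t →
        c ≤ f x + (inner ℝ lam (h x) : ℝ) + r / (2 * t) * ‖h x‖ ^ 2 + r / 2 * t
            + r / (2 * t) * s ^ 2 :=
  stmt12_general f h κf κh hfb hhb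
end

section
/- Let f : ℝⁿ → ℝ and h : ℝⁿ → ℝᵐ be twice continuously differentiable, with f bounded from below and h bounded. Then for every (λ, r) ∈ ℝᵐ × (0, ∞), every s > 0 and every ε̃ > 0, there exists a pair (x(s), t(s)) ∈ ℝⁿ × (0, ∞) such that ‖∇L̂ˢ_{λ,r}(x(s), t(s))‖ ≤ ε̃. -/
/-!
At `t = √(‖h x‖² + s²)` the `t`-component of `∇L̂ˢ_{λ,r}` vanishes, and the `x`-component is
the gradient of `ψ x = f x + ⟪λ, h x⟫ + r √(‖h x‖² + s²)` (the value of `L̂ˢ_{λ,r}(x, ·)` at that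
`t`), computed by the chain rule through `h`. The function `ψ` is differentiable because
`s ≠ 0`, and bounded below because `f` is and `h` takes values in a compact ball. Finally, a
differentiable function bounded below on a proper space has points of arbitrarily small
gradient: a minimizer `z` of `ψ + δ ‖·‖²` has `∇ψ z = -2δ z` and `δ ‖z‖² ≤ ψ 0 - inf ψ`, so
`‖∇ψ z‖² ≤ 4δ (ψ 0 - inf ψ)`, which is small for small `δ`.
-/

open InnerProductSpace Filter Set
open scoped RealInnerProductSpace

variable {E : Type*} [NormedAddCommGroup E] [InnerProductSpace ℝ E]

section Gradient

variable [CompleteSpace E]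

theorem HasGradientAt.add {f g : E → ℝ} {a b x : E} (hf : HasGradientAt f a x)
    (hg : HasGradientAt g b x) : HasGradientAt (fun y => f y + g y) (a + b) x := by
  rw [hasGradientAt_iff_hasFDerivAt, map_add]
  exact HasFDerivAt.add hf hg

theorem hasGradientAt_comp_euclideanSpace {ι : Type*} [Fintype ι]
    {g : EuclideanSpace ℝ ι → ℝ} {h : E → EuclideanSpace ℝ ι} {a : EuclideanSpace ℝ ι} {x : E}
    (hg : HasGradientAt g a (h x)) (hh : DifferentiableAt ℝ h x) :
    HasGradientAt (fun y => g (h y)) (∑ i, a i • gradient (fun y => h y i) x) x := by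
  have hcomp (i : ι) (v : E) : fderiv ℝ (fun y => h y i) x v = fderiv ℝ h x v i :=
    congrArg (· v) ((EuclideanSpace.proj (𝕜 := ℝ) i).hasFDerivAt.comp x hh.hasFDerivAt).fderiv
  rw [hasGradientAt_iff_hasFDerivAt]
  refine (hasGradientAt_iff_hasFDerivAt.mp hg).comp x hh.hasFDerivAt |>.congr_fderiv ?_
  ext v
  simp [hcomp, PiLp.inner_apply, mul_comm]

theorem hasGradientAt_inner_add_mul_sqrt_norm_sq_add_sq (c : E) (r : ℝ) {s : ℝ} (hs : s ≠ 0)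
    (y : E) :
    HasGradientAt (fun y => ⟪c, y⟫ + r * √(‖y‖ ^ 2 + s ^ 2))
      (c + (r / √(‖y‖ ^ 2 + s ^ 2)) • y) y := by
  have hsqrt := ((hasStrictFDerivAt_norm_sq y).hasFDerivAt.add_const (s ^ 2)).sqrt
    (by positivity)
  rw [hasGradientAt_iff_hasFDerivAt]
  refine ((innerSL ℝ c).hasFDerivAt.add (hsqrt.const_mul r)).congr_fderiv ?_
  ext v
  simp
  field_simp

end Gradient

theorem exists_norm_gradient_le_of_bddBelow [ProperSpace E] {ψ : E → ℝ}
    (hψ : Differentiable ℝ ψ) (hb : BddBelow (range ψ)) {ε : ℝ} (hε : 0 < ε) :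
    ∃ x, ‖gradient ψ x‖ ≤ ε := by
  obtain ⟨κ, hκ⟩ := hb
  have hκ' (x : E) : κ ≤ ψ x := hκ (mem_range_self x)
  set M := ψ 0 - κ
  set δ := ε ^ 2 / (4 * (M + 1))
  have hM : 0 ≤ M := sub_nonneg.mpr (hκ' 0)
  have hδ : 0 < δ := by positivity
  set g : E → ℝ := fun x => ψ x + δ * ‖x‖ ^ 2
  have hg (x : E) : HasFDerivAt g (fderiv ℝ ψ x + δ • (2 • innerSL ℝ x)) x :=
    (hψ x).hasFDerivAt.add ((hasStrictFDerivAt_norm_sq x).hasFDerivAt.const_mul δ)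
  have hcoercive : Tendsto g (cocompact E) atTop := by
    refine tendsto_atTop_mono (fun x => add_le_add_left (hκ' x) _) ?_
    exact tendsto_atTop_add_const_left _ _ <|
      ((tendsto_pow_atTop two_ne_zero).comp tendsto_norm_cocompact_atTop).const_mul_atTop hδ
  obtain ⟨z, hz⟩ := (continuous_iff_continuousAt.mpr fun x => (hg x).continuousAt).exists_forall_le
    hcoercive
  have hcrit : fderiv ℝ ψ z = -(δ • (2 • innerSL ℝ z)) :=
    eq_neg_of_add_eq_zero_left (IsLocalMin.hasFDerivAt_eq_zero (.of_forall hz) (hg z))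
  have hnorm : ‖gradient ψ z‖ = 2 * δ * ‖z‖ := by
    rw [← (toDual ℝ E).norm_map, toDual_gradient, hcrit, norm_neg, ← ofNat_smul_eq_nsmul ℝ,
      smul_smul, norm_smul, innerSL_apply_norm, Real.norm_of_nonneg (by positivity)]
    ring
  have hz0 : δ * ‖z‖ ^ 2 ≤ M := by
    have := hz 0
    simp only [g, norm_zero] at this
    linarith [hκ' z]
  have hε2 : 4 * δ * (M + 1) = ε ^ 2 := by simp only [δ]; field_simp
  refine ⟨z, hnorm ▸ (pow_le_pow_iff_left₀ (by positivity) hε.le two_ne_zero).mp ?_⟩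
  nlinarith

theorem bddBelow_range_comp_of_isBounded {F X : Type*} [PseudoMetricSpace F] [ProperSpace F]
    {φ : F → ℝ} (hφ : Continuous φ) {h : X → F} (hh : Bornology.IsBounded (range h)) :
    BddBelow (range fun x => φ (h x)) :=
  (hh.isCompact_closure.bddBelow_image hφ.continuousOn).mono <| by
    rw [range_comp']
    exact image_mono subset_closure

theorem stmt13_general {n m : ℕ} (f : EuclideanSpace ℝ (Fin n) → ℝ)
    (h : EuclideanSpace ℝ (Fin n) → EuclideanSpace ℝ (Fin m))
    (hf : ContDiff ℝ 2 f) (hh : ContDiff ℝ 2 h)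
    (hfb : ∃ κf, ∀ x, κf ≤ f x) (hhb : ∃ κh, ∀ x, ‖h x‖ ≤ κh)
    (lam : EuclideanSpace ℝ (Fin m)) (r s ε : ℝ) (hs : 0 < s) (hε : 0 < ε) :
    ∃ (x : EuclideanSpace ℝ (Fin n)) (t : ℝ), 0 < t ∧
      Real.sqrt
        (‖gradient f x + ∑ i, (lam i + (r / t) * h x i) • gradient (fun y => h y i) x‖ ^ 2 +
          ((r / 2) * (1 - (‖h x‖ ^ 2 + s ^ 2) / t ^ 2)) ^ 2) ≤ ε := by
  set t := fun x => √(‖h x‖ ^ 2 + s ^ 2)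
  have hgrad (x : EuclideanSpace ℝ (Fin n)) :
      HasGradientAt (fun y => f y + (⟪lam, h y⟫ + r * t y))
        (gradient f x + ∑ i, (lam i + r / t x * h x i) • gradient (fun y => h y i) x) x := by
    have := (hf.differentiable two_ne_zero x).hasGradientAt.add <|
      hasGradientAt_comp_euclideanSpace
        (hasGradientAt_inner_add_mul_sqrt_norm_sq_add_sq lam r hs.ne' (h x))
        (hh.differentiable two_ne_zero x)
    simpa using this
  obtain ⟨κf, hκf⟩ := hfb
  obtain ⟨κ, hκ⟩ : BddBelow (range fun x => ⟪lam, h x⟫ + r * t x) :=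
    bddBelow_range_comp_of_isBounded (φ := fun y => ⟪lam, y⟫ + r * √(‖y‖ ^ 2 + s ^ 2))
      (by fun_prop) (isBounded_iff_forall_norm_le.mpr (by simpa using hhb))
  obtain ⟨x, hx⟩ := exists_norm_gradient_le_of_bddBelow (fun x => (hgrad x).differentiableAt)
    ⟨κf + κ, by rintro _ ⟨x, rfl⟩; exact add_le_add (hκf x) (hκ (mem_range_self x))⟩ hε
  have ht : t x ^ 2 = ‖h x‖ ^ 2 + s ^ 2 := Real.sq_sqrt (by positivity)
  refine ⟨x, t x, by positivity, ?_⟩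
  rwa [← ht, div_self (by positivity), sub_self, mul_zero, zero_pow two_ne_zero, add_zero,
    Real.sqrt_sq (norm_nonneg _), ← (hgrad x).gradient]

/-- if `f`, `h` are twice continuously differentiable, `f` is bounded below
and `h` is bounded, then for every `(λ, r)` with `r > 0`, every barrier parameter `s > 0`
and every `ε̃ > 0`, the barrier-augmented smoothing function
`L̂ˢ_{λ,r}(x,t) = f x + ⟨λ, h x⟩ + (r/(2t))‖h x‖² + (r/2)t + (r/(2t))s²` has an inexact
stationary point: there exists `(x(s), t(s))` with `t(s) > 0` and
`‖∇L̂ˢ_{λ,r}(x(s), t(s))‖ ≤ ε̃`, where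
`∇L̂ˢ_{λ,r}(x,t) = (∇f(x) + ∇h(x)(λ + (r/t) h(x)), (r/2)(1 − (‖h x‖² + s²)/t²))`. -/
theorem stmt13 {n m : ℕ} (f : EuclideanSpace ℝ (Fin n) → ℝ)
    (h : EuclideanSpace ℝ (Fin n) → EuclideanSpace ℝ (Fin m))
    (hf : ContDiff ℝ 2 f) (hh : ContDiff ℝ 2 h)
    (hfb : ∃ κf, ∀ x, κf ≤ f x) (hhb : ∃ κh, ∀ x, ‖h x‖ ≤ κh)
    (lam : EuclideanSpace ℝ (Fin m)) (r s ε : ℝ) (hr : 0 < r) (hs : 0 < s) (hε : 0 < ε) :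
    ∃ (x : EuclideanSpace ℝ (Fin n)) (t : ℝ), 0 < t ∧
      Real.sqrt
        (‖gradient f x + ∑ i, (lam i + (r / t) * h x i) • gradient (fun y => h y i) x‖ ^ 2 +
          ((r / 2) * (1 - (‖h x‖ ^ 2 + s ^ 2) / t ^ 2)) ^ 2) ≤ ε :=
  stmt13_general f h hf hh hfb hhb lam r s ε hs hε
end

section
/- Let sequences {xᵏ} ⊂ ℝⁿ, {λ̄ᵏ} ⊂ [λ_min, λ_max]ᵐ, {r_k} ⊂ (0, ∞), {t_k} ⊂ (0, ∞), {ε_k} with ε_k ↓ 0, and {s_k} ⊂ (0, ∞) bounded be generated by Algorithm 2: t_{k+1} = √(‖h(xᵏ)‖² + s_k²); ‖∇f(x^{k+1}) + ∇h(x^{k+1})(λ̄ᵏ + (r_k/t_{k+1}) h(x^{k+1}))‖ ≤ ε_k; and r_{k+1} = r_k if ‖h(x^{k+1})‖ ≤ τ ‖h(xᵏ)‖, r_{k+1} = γ r_k otherwise, where 0 < τ < 1 and γ > 1. If {r_k} is bounded and x̄ is a limit point of {xᵏ}, then x̄ is a stationary point of (NLP): h(x̄) = 0 and there exists μ ∈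 ℝᵐ with ∇f(x̄) + ∇h(x̄) μ = 0. -/
open Filter

lemma aux_coord_le_norm {m : ℕ} (z : EuclideanSpace ℝ (Fin m)) (i : Fin m) : |z i| ≤ ‖z‖ := by
  rw [EuclideanSpace.norm_eq, ← Real.sqrt_sq_eq_abs]
  apply Real.sqrt_le_sqrt
  have h1 : z i ^ 2 = ‖z i‖ ^ 2 := by rw [Real.norm_eq_abs, sq_abs]
  rw [h1]
  exact Finset.single_le_sum (f := fun j => ‖z j‖ ^ 2) (fun j _ => by positivity)
    (Finset.mem_univ i)

lemma aux_norm_le {m : ℕ} (z : EuclideanSpace ℝ (Fin m)) (C : ℝ)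
    (hb : ∀ i, |z i| ≤ C) : ‖z‖ ≤ Real.sqrt (m * C ^ 2) := by
  rw [EuclideanSpace.norm_eq]
  apply Real.sqrt_le_sqrt
  calc ∑ i, ‖z i‖ ^ 2 ≤ ∑ _i : Fin m, C ^ 2 := by
        apply Finset.sum_le_sum
        intro i _
        rw [Real.norm_eq_abs]
        exact pow_le_pow_left₀ (abs_nonneg _) (hb i) 2
    _ = m * C ^ 2 := by simp [Finset.sum_const, mul_comm]

lemma aux_grad_cont {n : ℕ} {f : EuclideanSpace ℝ (Fin n) → ℝ} (hf : ContDiff ℝ 2 f) :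
    Continuous (gradient f) := by
  have h1 : Continuous (fderiv ℝ f) := hf.continuous_fderiv (by norm_num)
  exact (InnerProductSpace.toDual ℝ (EuclideanSpace ℝ (Fin n))).symm.continuous.comp h1

/-- Algorithm 2 (fixed smoothing parameter). If the penalty parameters `{r_k}`
are bounded, then every limit point `x̄` of `{xᵏ}` is a stationary point of the NLP:
`h x̄ = 0` and `∇f(x̄) + ∇h(x̄) μ = 0` for some `μ ∈ ℝᵐ`. -/
theorem stmt14 {n m : ℕ} (f : EuclideanSpace ℝ (Fin n) → ℝ)
    (h : EuclideanSpace ℝ (Fin n) → EuclideanSpace ℝ (Fin m))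
    (hf : ContDiff ℝ 2 f) (hh : ContDiff ℝ 2 h)
    (lammin lammax τ γ : ℝ) (hlm : lammin < lammax)
    (hτ0 : 0 < τ) (hτ1 : τ < 1) (hγ : 1 < γ)
    (x : ℕ → EuclideanSpace ℝ (Fin n)) (lamb : ℕ → EuclideanSpace ℝ (Fin m))
    (rr t eps s : ℕ → ℝ)
    (hbox : ∀ k i, lammin ≤ lamb k i ∧ lamb k i ≤ lammax)
    (hrpos : ∀ k, 0 < rr k)
    (hepspos : ∀ k, 0 < eps k) (hepsanti : Antitone eps)
    (hepslim : Tendsto eps atTop (nhds 0))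
    (hspos : ∀ k, 0 < s k) (hsbdd : ∃ S, ∀ k, s k ≤ S)
    (ht : ∀ k, t (k + 1) = Real.sqrt (‖h (x k)‖ ^ 2 + s k ^ 2))
    (hstat : ∀ k, ‖gradient f (x (k + 1)) +
      ∑ i, (lamb k i + (rr k / t (k + 1)) * h (x (k + 1)) i) •
        gradient (fun y => h y i) (x (k + 1))‖ ≤ eps k)
    (hpen : ∀ k, rr (k + 1) =
      if ‖h (x (k + 1))‖ ≤ τ * ‖h (x k)‖ then rr k else γ * rr k)
    (hrbdd : ∃ B, ∀ k, rr k ≤ B)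
    (xbar : EuclideanSpace ℝ (Fin n)) (φ : ℕ → ℕ) (hφ : StrictMono φ)
    (hlim : Tendsto (fun j => x (φ j)) atTop (nhds xbar)) :
    h xbar = 0 ∧
    ∃ μ : EuclideanSpace ℝ (Fin m),
      gradient f xbar + ∑ i, μ i • gradient (fun y => h y i) xbar = 0 := by
  classical
  obtain ⟨B, hB⟩ := hrbdd
  have hγ0 : (0:ℝ) < γ := lt_trans one_pos hγ
  have hrmono : Monotone rr := by
    apply monotone_nat_of_le_succ
    intro k
    rw [hpen k]
    split_ifs with hc
    · exact le_rfl
    · nlinarith [hrpos k]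
  -- Step 1: eventual contraction of ‖h(xᵏ)‖
  have hKex : ∃ K, ∀ k, K ≤ k → ‖h (x (k+1))‖ ≤ τ * ‖h (x k)‖ := by
    by_contra hcon
    push_neg at hcon
    have key : ∀ j : ℕ, ∃ k, γ ^ j * rr 0 ≤ rr k := by
      intro j
      induction j with
      | zero => exact ⟨0, by simp⟩
      | succ j ih =>
        obtain ⟨k, hk⟩ := ih
        obtain ⟨k', hk', hfail⟩ := hcon k
        refine ⟨k' + 1, ?_⟩
        rw [hpen k', if_neg (not_le.mpr hfail)]
        have h1 : rr k ≤ rr k' := hrmono hk'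
        have h2 : (0:ℝ) < γ ^ j := pow_pos hγ0 j
        calc γ ^ (j+1) * rr 0 = γ * (γ ^ j * rr 0) := by ring
          _ ≤ γ * rr k := by nlinarith
          _ ≤ γ * rr k' := by nlinarith
    have htend : Tendsto (fun j => γ ^ j * rr 0) atTop atTop :=
      Tendsto.atTop_mul_const (hrpos 0) (tendsto_pow_atTop_atTop_of_one_lt hγ)
    obtain ⟨j, hj⟩ := (htend.eventually_gt_atTop B).exists
    obtain ⟨k, hk⟩ := key j
    exact absurd (hk.trans (hB k)) (not_le.mpr hj)
  obtain ⟨K, hK⟩ := hKex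
  -- Step 2: ‖h(xᵏ)‖ → 0, hence h x̄ = 0
  have hgeo : ∀ j : ℕ, ‖h (x (K + j))‖ ≤ τ ^ j * ‖h (x K)‖ := by
    intro j
    induction j with
    | zero => simp
    | succ j ih =>
      have h1 := hK (K + j) (Nat.le_add_right _ _)
      have h2 : K + (j + 1) = (K + j) + 1 := by ring
      rw [h2]
      calc ‖h (x ((K + j) + 1))‖ ≤ τ * ‖h (x (K + j))‖ := h1
        _ ≤ τ * (τ ^ j * ‖h (x K)‖) := by nlinarith
        _ = τ ^ (j+1) * ‖h (x K)‖ := by ring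
  have hgeolim : Tendsto (fun j : ℕ => τ ^ j * ‖h (x K)‖) atTop (nhds 0) := by
    have h1 := tendsto_pow_atTop_nhds_zero_of_lt_one (le_of_lt hτ0) hτ1
    simpa using h1.mul_const ‖h (x K)‖
  have hnorm0 : Tendsto (fun j => ‖h (x (K + j))‖) atTop (nhds 0) :=
    squeeze_zero (fun j => norm_nonneg _) hgeo hgeolim
  have hhx0 : Tendsto (fun k => ‖h (x k)‖) atTop (nhds 0) := by
    rw [← tendsto_add_atTop_iff_nat K]
    simpa [add_comm] using hnorm0
  have hφtop : Tendsto φ atTop atTop := hφ.tendsto_atTop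
  have hhxbar : h xbar = 0 := by
    have l1 : Tendsto (fun j => ‖h (x (φ j))‖) atTop (nhds ‖h xbar‖) :=
      ((hh.continuous.tendsto xbar).comp hlim).norm
    have l2 : Tendsto (fun j => ‖h (x (φ j))‖) atTop (nhds 0) := hhx0.comp hφtop
    have := tendsto_nhds_unique l1 l2
    rwa [norm_eq_zero] at this
  refine ⟨hhxbar, ?_⟩
  -- Step 3: multipliers
  set ψ : ℕ → ℕ := fun j => φ (j + (K + 1)) with hψdef
  have hψge : ∀ j, j + (K + 1) ≤ ψ j := fun j => hφ.le_apply
  set p : ℕ → ℕ := fun j => ψ j - 1 with hpdef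
  have hp : ∀ j, p j + 1 = ψ j := by
    intro j; have h1 := hψge j; simp only [hpdef]; omega
  have hpK : ∀ j, K ≤ p j := by
    intro j; have h1 := hψge j; simp only [hpdef]; omega
  have hpj : ∀ j, j ≤ p j := by
    intro j; have h1 := hψge j; simp only [hpdef]; omega
  have htpos : ∀ k, 0 < t (k + 1) := by
    intro k
    rw [ht k]
    have := hspos k
    apply Real.sqrt_pos.mpr
    positivity
  -- the multiplier sequence
  set μseq : ℕ → EuclideanSpace ℝ (Fin m) :=
    fun j => WithLp.toLp 2 (fun i => lamb (p j) i + (rr (p j) / t (ψ j)) * h (x (ψ j)) i) with hμdef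
  -- bound on the penalty term
  have hratio : ∀ k, K ≤ k → rr k / t (k+1) * ‖h (x (k+1))‖ ≤ B * τ := by
    intro k hk
    have htk := htpos k
    have ha : ‖h (x k)‖ ≤ t (k+1) := by
      rw [ht k, Real.le_sqrt (norm_nonneg _) (by positivity)]
      nlinarith [hspos k]
    have hc := hK k hk
    rw [div_mul_eq_mul_div, div_le_iff₀ htk]
    have h1 : rr k * ‖h (x (k+1))‖ ≤ rr k * (τ * ‖h (x k)‖) := by
      nlinarith [hrpos k]
    have h2 : rr k * (τ * ‖h (x k)‖) ≤ B * (τ * ‖h (x k)‖) :=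
      mul_le_mul_of_nonneg_right (hB k)
        (by positivity : (0:ℝ) ≤ τ * ‖h (x k)‖)
    have hB0 : 0 < B := lt_of_lt_of_le (hrpos 0) (hB 0)
    nlinarith [mul_le_mul_of_nonneg_left ha (mul_nonneg hB0.le hτ0.le)]
  set C : ℝ := max |lammin| |lammax| + B * τ with hCdef
  have hμbdd : ∀ j, μseq j ∈ Metric.closedBall (0 : EuclideanSpace ℝ (Fin m))
      (Real.sqrt (m * C ^ 2)) := by
    intro j
    rw [Metric.mem_closedBall, dist_zero_right]
    apply aux_norm_le
    intro i
    have hl : |lamb (p j) i| ≤ max |lammin| |lammax| := by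
      obtain ⟨hl1, hl2⟩ := hbox (p j) i
      rw [abs_le]
      constructor
      · calc -(max |lammin| |lammax|) ≤ -|lammin| := by
              simp [le_max_left]
          _ ≤ lammin := neg_abs_le _
          _ ≤ lamb (p j) i := hl1
      · exact hl2.trans ((le_abs_self _).trans (le_max_right _ _))
    have hterm : |(rr (p j) / t (ψ j)) * h (x (ψ j)) i| ≤ B * τ := by
      rw [abs_mul]
      have hr0 : 0 ≤ rr (p j) / t (ψ j) := by
        have := htpos (p j)
        rw [hp j] at this
        exact le_of_lt (div_pos (hrpos _) this)
      rw [abs_of_nonneg hr0]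
      have h1 : |h (x (ψ j)) i| ≤ ‖h (x (ψ j))‖ := aux_coord_le_norm _ i
      have h2 := hratio (p j) (hpK j)
      rw [hp j] at h2
      nlinarith
    calc |μseq j i| ≤ |lamb (p j) i| + |(rr (p j) / t (ψ j)) * h (x (ψ j)) i| :=
          abs_add_le _ _
      _ ≤ C := by rw [hCdef]; exact add_le_add hl hterm
  obtain ⟨μ, -, σ, hσ, hμlim⟩ :=
    tendsto_subseq_of_bounded Metric.isBounded_closedBall hμbdd
  refine ⟨μ, ?_⟩
  -- continuity of gradients
  have hgradf : Continuous (gradient f) := aux_grad_cont hf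
  have hhcoord : ∀ i : Fin m, ContDiff ℝ 2 (fun y => h y i) := fun i => by
    exact ((EuclideanSpace.proj (𝕜 := ℝ) i).contDiff.comp hh :)
  have hgradh : ∀ i : Fin m, Continuous (gradient (fun y => h y i)) := fun i =>
    aux_grad_cont (hhcoord i)
  -- convergence of x along ψ ∘ σ
  have hxψ : Tendsto (fun j => x (ψ j)) atTop (nhds xbar) :=
    hlim.comp (tendsto_add_atTop_nat (K + 1))
  have hxσ : Tendsto (fun l => x (ψ (σ l))) atTop (nhds xbar) :=
    hxψ.comp hσ.tendsto_atTop
  -- the sequence of "residuals"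
  set w : ℕ → EuclideanSpace ℝ (Fin n) := fun l =>
    gradient f (x (ψ (σ l))) +
      ∑ i, μseq (σ l) i • gradient (fun y => h y i) (x (ψ (σ l))) with hwdef
  set L : EuclideanSpace ℝ (Fin n) :=
    gradient f xbar + ∑ i, μ i • gradient (fun y => h y i) xbar with hLdef
  have hwlim : Tendsto w atTop (nhds L) := by
    apply Tendsto.add
    · exact (hgradf.tendsto xbar).comp hxσ
    · apply tendsto_finset_sum
      intro i _
      apply Tendsto.smul
      · exact ((EuclideanSpace.proj i).continuous.tendsto μ).comp hμlim
      · exact ((hgradh i).tendsto xbar).comp hxσ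
  have hwbound : ∀ l, ‖w l‖ ≤ eps (p (σ l)) := by
    intro l
    have := hstat (p (σ l))
    rw [hp (σ l)] at this
    exact this
  have hepsσ : Tendsto (fun l => eps (p (σ l))) atTop (nhds 0) := by
    apply hepslim.comp
    apply tendsto_atTop_mono (fun l => (hσ.le_apply).trans (hpj (σ l)))
    exact tendsto_id
  have hwn0 : Tendsto (fun l => ‖w l‖) atTop (nhds 0) :=
    squeeze_zero (fun l => norm_nonneg _) hwbound hepsσ
  have hLnorm : ‖L‖ = 0 := tendsto_nhds_unique hwlim.norm hwn0
  rw [norm_eq_zero] at hLnorm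
  exact hLnorm
end

section
/- Let sequences {xᵏ} ⊂ ℝⁿ, {λ̄ᵏ} ⊂ [λ_min, λ_max]ᵐ, {r_k} ⊂ (0, ∞), {t_k} ⊂ (0, ∞), {ε_k} with ε_k ↓ 0, and {s_k} ⊂ (0, ∞) bounded be generated by Algorithm 2: t_{k+1} = √(‖h(xᵏ)‖² + s_k²); ‖∇f(x^{k+1}) + ∇h(x^{k+1})(λ̄ᵏ + (r_k/t_{k+1}) h(x^{k+1}))‖ ≤ ε_k; and r_{k+1} = r_k if ‖h(x^{k+1})‖ ≤ τ ‖h(xᵏ)‖, r_{k+1} = γ r_k otherwise, where 0 < τ < 1 and γ > 1. If {r_k} is unbounded, {h(xᵏ)} is bounded, and x̄ is a limit point of {xᵏ}, then ∇h(x̄) h(x̄) = 0, i.e. x̄ is a stationary point of the unconstrained problem of minimizing ‖h(x)‖². -/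
/-!
Dividing the approximate stationarity condition by `r_k / t_{k+1}` gives
`‖∇h(x^{k+1}) h(x^{k+1})‖ ≤ (t_{k+1} / r_k) (ε_k + ‖∇f(x^{k+1})‖ + L ∑ᵢ ‖∇hᵢ(x^{k+1})‖)`,
with `L` a bound on the safeguarded multipliers. The penalties never decrease, so being
unbounded they tend to infinity, while `t_{k+1}` stays bounded because `h(xᵏ)` and `s_k` do.
Along a subsequence with `x^{k+1} → x̄` the bracket converges, so the left side tends to `0`,
and by continuity `∇h(x̄) h(x̄) = 0`.
-/

open Filter Topology

theorem ContDiff.continuous_gradient {E : Type*} [NormedAddCommGroup E] [InnerProductSpace ℝ E]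
    [CompleteSpace E] {g : E → ℝ} {k : WithTop ℕ∞} (hg : ContDiff ℝ k g) (hk : k ≠ 0) :
    Continuous (gradient g) :=
  (InnerProductSpace.toDual ℝ E).symm.continuous.comp (hg.continuous_fderiv hk)

theorem norm_sum_smul_le_of_norm_add_sum_smul_le {E ι : Type*} [NormedAddCommGroup E]
    [NormedSpace ℝ E] [Fintype ι] {g₀ : E} {g : ι → E} {μ v : ι → ℝ} {a ε L : ℝ}
    (ha : 0 < a) (hμ : ∀ i, |μ i| ≤ L) (hε : ‖g₀ + ∑ i, (μ i + a * v i) • g i‖ ≤ ε) :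
    ‖∑ i, v i • g i‖ ≤ a⁻¹ * (ε + ‖g₀‖ + L * ∑ i, ‖g i‖) := by
  set A := g₀ + ∑ i, (μ i + a * v i) • g i
  have hA : A = g₀ + ∑ i, μ i • g i + a • ∑ i, v i • g i := by
    simp only [A, add_smul, mul_smul, Finset.sum_add_distrib, Finset.smul_sum, add_assoc]
  have hv : ∑ i, v i • g i = a⁻¹ • (A - g₀ - ∑ i, μ i • g i) := by
    rw [hA, eq_inv_smul_iff₀ ha.ne']
    abel
  have hμg : ‖∑ i, μ i • g i‖ ≤ L * ∑ i, ‖g i‖ :=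
    calc ‖∑ i, μ i • g i‖ ≤ ∑ i, |μ i| * ‖g i‖ := by
          simpa only [norm_smul, Real.norm_eq_abs] using norm_sum_le Finset.univ fun i => μ i • g i
      _ ≤ ∑ i, L * ‖g i‖ := by gcongr with i; exact hμ i
      _ = L * ∑ i, ‖g i‖ := Finset.mul_sum _ _ _ |>.symm
  rw [hv, norm_smul, Real.norm_of_nonneg (inv_nonneg.2 ha.le)]
  gcongr
  exact (norm_sub_le _ _).trans (add_le_add (norm_sub_le_of_le hε le_rfl) hμg)

theorem tendsto_atTop_of_eq_or_eq_mul {r : ℕ → ℝ} {γ : ℝ} (hr : ∀ k, 0 ≤ r k) (hγ : 1 ≤ γ)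
    (hupd : ∀ k, r (k + 1) = r k ∨ r (k + 1) = γ * r k) (hunbdd : ¬∃ B, ∀ k, r k ≤ B) :
    Tendsto r atTop atTop := by
  have hmono : Monotone r := monotone_nat_of_le_succ fun k => by
    rcases hupd k with hk | hk <;> rw [hk]
    exact le_mul_of_one_le_left (hr k) hγ
  refine tendsto_atTop_atTop_of_monotone' hmono ?_
  rintro ⟨B, hB⟩
  exact hunbdd ⟨B, fun k => hB ⟨k, rfl⟩⟩

theorem StrictMono.tendsto_comp_pred_succ {α : Type*} [TopologicalSpace α] {u : ℕ → α} {a : α}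
    {φ : ℕ → ℕ} (hφ : StrictMono φ) (hu : Tendsto (fun j => u (φ j)) atTop (𝓝 a)) :
    Tendsto (fun j => u (φ j - 1 + 1)) atTop (𝓝 a) := by
  refine hu.congr' ?_
  filter_upwards [eventually_ge_atTop 1] with j hj
  rw [Nat.sub_add_cancel (hj.trans (hφ.id_le j))]

theorem eq_zero_of_norm_le_mul_of_tendsto {E α : Type*} [NormedAddCommGroup E] {l : Filter α}
    [l.NeBot] {u : α → E} {U : E} {c b : α → ℝ} {B : ℝ} (hu : Tendsto u l (𝓝 U))
    (hc : Tendsto c l (𝓝 0)) (hb : Tendsto b l (𝓝 B)) (hle : ∀ᶠ j in l, ‖u j‖ ≤ c j * b j) :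
    U = 0 := by
  refine tendsto_nhds_unique hu (squeeze_zero_norm' hle ?_)
  simpa using hc.mul hb

theorem stmt15_general {n m : ℕ} (f : EuclideanSpace ℝ (Fin n) → ℝ)
    (h : EuclideanSpace ℝ (Fin n) → EuclideanSpace ℝ (Fin m))
    (hf : ContDiff ℝ 2 f) (hh : ContDiff ℝ 2 h)
    (lammin lammax τ γ : ℝ) (hγ : 1 < γ)
    (x : ℕ → EuclideanSpace ℝ (Fin n)) (lamb : ℕ → EuclideanSpace ℝ (Fin m))
    (rr t eps s : ℕ → ℝ)
    (hbox : ∀ k i, lammin ≤ lamb k i ∧ lamb k i ≤ lammax)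
    (hrpos : ∀ k, 0 < rr k)
    (hepslim : Tendsto eps atTop (nhds 0))
    (hspos : ∀ k, 0 < s k) (hsbdd : ∃ S, ∀ k, s k ≤ S)
    (ht : ∀ k, t (k + 1) = Real.sqrt (‖h (x k)‖ ^ 2 + s k ^ 2))
    (hstat : ∀ k, ‖gradient f (x (k + 1)) +
      ∑ i, (lamb k i + (rr k / t (k + 1)) * h (x (k + 1)) i) •
        gradient (fun y => h y i) (x (k + 1))‖ ≤ eps k)
    (hpen : ∀ k, rr (k + 1) =
      if ‖h (x (k + 1))‖ ≤ τ * ‖h (x k)‖ then rr k else γ * rr k)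
    (hrunbdd : ¬ ∃ B, ∀ k, rr k ≤ B)
    (hhbdd : ∃ B, ∀ k, ‖h (x k)‖ ≤ B)
    (xbar : EuclideanSpace ℝ (Fin n)) (φ : ℕ → ℕ) (hφ : StrictMono φ)
    (hlim : Tendsto (fun j => x (φ j)) atTop (nhds xbar)) :
    ∑ i, h xbar i • gradient (fun y => h y i) xbar = 0 := by
  obtain ⟨B, hB⟩ := hhbdd
  obtain ⟨S, hS⟩ := hsbdd
  have hcoord (i : Fin m) : ContDiff ℝ 2 fun y => h y i :=
    (EuclideanSpace.proj (𝕜 := ℝ) i).contDiff.comp hh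
  set F := fun y => ∑ i, h y i • gradient (fun z => h z i) y
  set L := max |lammin| |lammax|
  set G := fun y => ‖gradient f y‖ + L * ∑ i, ‖gradient (fun z => h z i) y‖
  have hF : Continuous F := continuous_finsetSum _ fun i _ =>
    (hcoord i).continuous.smul ((hcoord i).continuous_gradient two_ne_zero)
  have hG : Continuous G := (hf.continuous_gradient two_ne_zero).norm.add <|
    continuous_const.mul <| continuous_finsetSum _ fun i _ =>
      ((hcoord i).continuous_gradient two_ne_zero).norm
  have htpos (k : ℕ) : 0 < t (k + 1) := by rw [ht k]; have := hspos k; positivity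
  have htle (k : ℕ) : t (k + 1) ≤ B + S := by
    have := hB k; have := hS k; have := hspos k; have := norm_nonneg (h (x k))
    rw [ht k, Real.sqrt_le_iff]
    constructor <;> nlinarith
  have hbound (k : ℕ) : ‖F (x (k + 1))‖ ≤ t (k + 1) / rr k * (eps k + G (x (k + 1))) := by
    have := norm_sum_smul_le_of_norm_add_sum_smul_le (div_pos (hrpos k) (htpos k))
      (fun i => abs_le_max_abs_abs (hbox k i).1 (hbox k i).2) (hstat k)
    rwa [inv_div, add_assoc] at this
  have hr : Tendsto rr atTop atTop := by
    refine tendsto_atTop_of_eq_or_eq_mul (fun k => (hrpos k).le) hγ.le (fun k => ?_) hrunbdd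
    rw [hpen k]; split_ifs <;> simp
  have hc : Tendsto (fun k => t (k + 1) / rr k) atTop (𝓝 0) :=
    squeeze_zero (fun k => (div_pos (htpos k) (hrpos k)).le)
      (fun k => div_le_div_of_nonneg_right (htle k) (hrpos k).le)
      (tendsto_const_nhds.div_atTop hr)
  -- the bound at `x (k + 1)` involves `r_k`, so we follow the shifted indices `φ j - 1`
  have hψ : Tendsto (fun j => φ j - 1) atTop atTop :=
    (tendsto_sub_atTop_nat 1).comp hφ.tendsto_atTop
  have hxψ := hφ.tendsto_comp_pred_succ hlim
  exact eq_zero_of_norm_le_mul_of_tendsto ((hF.tendsto xbar).comp hxψ) (hc.comp hψ)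
    ((hepslim.comp hψ).add ((hG.tendsto xbar).comp hxψ)) (.of_forall fun j => hbound _)

/-- Algorithm 2 (fixed smoothing parameter). If the penalty parameters `{r_k}`
are unbounded and `{h(xᵏ)}` is bounded, then every limit point `x̄` of `{xᵏ}` is a
stationary point of the unconstrained problem of minimizing `‖h(x)‖²`, i.e.
`∇h(x̄) h(x̄) = 0`. -/
theorem stmt15 {n m : ℕ} (f : EuclideanSpace ℝ (Fin n) → ℝ)
    (h : EuclideanSpace ℝ (Fin n) → EuclideanSpace ℝ (Fin m))
    (hf : ContDiff ℝ 2 f) (hh : ContDiff ℝ 2 h)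
    (lammin lammax τ γ : ℝ) (hlm : lammin < lammax)
    (hτ0 : 0 < τ) (hτ1 : τ < 1) (hγ : 1 < γ)
    (x : ℕ → EuclideanSpace ℝ (Fin n)) (lamb : ℕ → EuclideanSpace ℝ (Fin m))
    (rr t eps s : ℕ → ℝ)
    (hbox : ∀ k i, lammin ≤ lamb k i ∧ lamb k i ≤ lammax)
    (hrpos : ∀ k, 0 < rr k)
    (hepspos : ∀ k, 0 < eps k) (hepsanti : Antitone eps)
    (hepslim : Tendsto eps atTop (nhds 0))
    (hspos : ∀ k, 0 < s k) (hsbdd : ∃ S, ∀ k, s k ≤ S)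
    (ht : ∀ k, t (k + 1) = Real.sqrt (‖h (x k)‖ ^ 2 + s k ^ 2))
    (hstat : ∀ k, ‖gradient f (x (k + 1)) +
      ∑ i, (lamb k i + (rr k / t (k + 1)) * h (x (k + 1)) i) •
        gradient (fun y => h y i) (x (k + 1))‖ ≤ eps k)
    (hpen : ∀ k, rr (k + 1) =
      if ‖h (x (k + 1))‖ ≤ τ * ‖h (x k)‖ then rr k else γ * rr k)
    (hrunbdd : ¬ ∃ B, ∀ k, rr k ≤ B)
    (hhbdd : ∃ B, ∀ k, ‖h (x k)‖ ≤ B)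
    (xbar : EuclideanSpace ℝ (Fin n)) (φ : ℕ → ℕ) (hφ : StrictMono φ)
    (hlim : Tendsto (fun j => x (φ j)) atTop (nhds xbar)) :
    ∑ i, h xbar i • gradient (fun y => h y i) xbar = 0 :=
  stmt15_general f h hf hh lammin lammax τ γ hγ x lamb rr t eps s hbox hrpos hepslim hspos hsbdd ht
    hstat hpen hrunbdd hhbdd xbar φ hφ hlim
end
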